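/- arXiv:1610.03278 — 2 statements merged into one kernel-verified Lean document; each statement's English description precedes it below -/
import Mathlib

section
/- Let F : ℝ^m → ℝ^m be a C¹ globally integrable vector field with flow Φ, and let V : ℝ^m → ℝ be a strict Lyapunov function for Φ, i.e. V(Φ_t(x)) < V(x) for all x not in the equilibrium set Eq(F) = {x : F(x) = 0} and all t > 0. Let X : ℝ≥0 → ℝ^m be a bounded asymptotic pseudotrajectory of Φ with limit set L. If V(L ∩ Eq(F)) has empty interior in ℝ, then L ⊆ Eq(F) and V is constant on L. -/
/-!
Let `L` be the limit set of `X`. Compactness of `L` and the intermediate value theorem along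
`X` show that `V '' L` is an interval. Every value `v ∈ V '' L` is the value of an equilibrium
in `L`: otherwise `V` decreases by a definite amount along `φ 1` on the points near `L` whose
value lies in a band around `v`, and since `X` tracks the flow over unit times, `V ∘ X`
eventually stays below `v`, contradicting that `v` is a limit value of `V ∘ X`. So `V '' L` is
an interval inside a set with empty interior, hence a point; and since `L` is invariant under
`φ 1`, which strictly decreases `V` off the equilibria, `L` consists of equilibria.
-/

open Set Filter Topology MeasureTheory Asymptotics

noncomputable section

/-- `φ` is the flow induced by the (globally integrable) vector field `F`. -/
def IsFlowOf {E : Type*} [NormedAddCommGroup E] [NormedSpace ℝ E]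
    (F : E → E) (φ : ℝ → E → E) : Prop :=
  (∀ x, φ 0 x = x) ∧ (∀ s t x, φ (s + t) x = φ s (φ t x)) ∧
    (∀ x t, HasDerivAt (fun τ => φ τ x) (F (φ t x)) t)

/-- `X` is an asymptotic pseudotrajectory of the flow `φ`. -/
def IsAPT {E : Type*} [NormedAddCommGroup E] [NormedSpace ℝ E]
    (φ : ℝ → E → E) (X : ℝ → E) : Prop :=
  ∀ T > (0:ℝ), ∀ ε > (0:ℝ), ∃ t₀ : ℝ, ∀ t ≥ t₀, ∀ h ∈ Icc (0:ℝ) T,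
    ‖X (t + h) - φ h (X t)‖ ≤ ε

/-- The limit set of a curve `X`. -/
def limitSet {E : Type*} [NormedAddCommGroup E] (X : ℝ → E) : Set E :=
  ⋂ t : ℝ, closure (X '' Ici t)

open Metric Bornology

theorem IsCompact.exists_pos_forall_mem_thickening_le {α : Type*} [PseudoMetricSpace α]
    {K P : Set α} (hK : IsCompact K) (hP : IsClosed P) {f : α → ℝ} (hf : Continuous f)
    (hpos : ∀ x ∈ K ∩ P, 0 < f x) :
    ∃ δ > 0, ∀ x ∈ P ∩ thickening δ K, δ ≤ f x := by
  obtain ⟨c, hc, hcf⟩ := (hK.inter_right hP).exists_forall_le' hf.continuousOn hpos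
  have hKU : K ⊆ {x | c / 2 < f x} ∪ Pᶜ := fun x hxK => by
    by_cases hxP : x ∈ P
    · exact Or.inl (show c / 2 < f x by linarith [hcf x ⟨hxK, hxP⟩])
    · exact Or.inr hxP
  obtain ⟨r, hr, hrU⟩ :=
    hK.exists_thickening_subset_open ((isOpen_lt continuous_const hf).union hP.isOpen_compl) hKU
  refine ⟨min r (c / 2), by positivity, fun x ⟨hxP, hxK⟩ => ?_⟩
  rcases hrU (thickening_mono (min_le_left _ _) _ hxK) with h | h
  · exact (min_le_right _ _).trans h.le
  · exact absurd hxP h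

theorem eventually_le_of_rise_le_of_descent {g : ℝ → ℝ} {a b η κ : ℝ} (hab : a + η ≤ b)
    (hκ : 0 < κ) (hrise : ∀ᶠ t in atTop, ∀ h ∈ Icc (0:ℝ) 1, g (t + h) ≤ g t + η)
    (hdesc : ∀ᶠ t in atTop, g t ∈ Icc a b → g (t + 1) ≤ g t - κ)
    (hb : ∃ᶠ t in atTop, g t ≤ b) : ∀ᶠ t in atTop, g t ≤ a + 2 * η := by
  obtain ⟨T, hT⟩ := eventually_atTop.1 (hrise.and hdesc)
  obtain ⟨t₀, hTt₀, ht₀⟩ := frequently_atTop.1 hb T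
  -- on the grid `t₀ + ℕ`, `g` sinks by `κ` per step inside the band and cannot climb back
  -- above `a + η` once it has left the band from below
  have hgrid : ∀ n : ℕ, g (t₀ + n) ≤ max (b - n * κ) (a + η) := by
    intro n
    induction n with
    | zero => simpa using Or.inl ht₀
    | succ n ih =>
      obtain ⟨hr, hd⟩ := hT (t₀ + n) (by linarith [n.cast_nonneg (α := ℝ)])
      rw [Nat.cast_succ, ← add_assoc]
      rcases lt_or_ge (g (t₀ + n)) a with hlt | hge
      · exact le_max_of_le_right (by linarith [hr 1 ⟨zero_le_one, le_rfl⟩])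
      · have hle_b : g (t₀ + n) ≤ b :=
          ih.trans (max_le (sub_le_self _ (by positivity)) hab)
        have hstep := hd ⟨hge, hle_b⟩
        rcases le_max_iff.1 ih with h | h
        · exact le_max_of_le_left (by linarith)
        · exact le_max_of_le_right (by linarith)
  obtain ⟨N, hN⟩ := exists_nat_gt ((b - a - η) / κ)
  rw [div_lt_iff₀ hκ] at hN
  refine eventually_atTop.2 ⟨t₀ + N, fun s hs => ?_⟩
  have hs₀ : 0 ≤ s - t₀ := by linarith [N.cast_nonneg (α := ℝ)]
  set n := ⌊s - t₀⌋₊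
  have hNn : (N : ℝ) ≤ n := Nat.cast_le.2 (Nat.le_floor (by linarith))
  have hn : (n : ℝ) ≤ s - t₀ := Nat.floor_le hs₀
  have hn' : s - t₀ < n + 1 := Nat.lt_floor_add_one _
  have hgn : g (t₀ + n) ≤ a + η :=
    (hgrid n).trans (max_le (by linarith [mul_le_mul_of_nonneg_right hNn hκ.le]) le_rfl)
  have hrise_n := (hT (t₀ + n) (by linarith [n.cast_nonneg (α := ℝ)])).1 (s - (t₀ + n))
    ⟨by linarith, by linarith⟩
  rw [add_sub_cancel] at hrise_n
  linarith

section LimitSet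

variable {E : Type*} [NormedAddCommGroup E] {X : ℝ → E}

theorem mem_limitSet_iff {x : E} : x ∈ limitSet X ↔ MapClusterPt x atTop X := by
  rw [limitSet, mem_iInter, mapClusterPt_atTop_iff_forall_mem_closure]

theorem limitSet_subset_closure_range : limitSet X ⊆ closure (range X) :=
  fun _ hx => closure_mono (image_subset_range _ _) (mem_iInter.1 hx 0)

variable [ProperSpace E]

theorem isCompact_limitSet (hXb : IsBounded (range X)) : IsCompact (limitSet X) :=
  hXb.isCompact_closure.of_isClosed_subset (isClosed_iInter fun _ => isClosed_closure)
    limitSet_subset_closure_range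

theorem eventually_mem_of_limitSet_subset (hXb : IsBounded (range X)) {U : Set E}
    (hU : IsOpen U) (hLU : limitSet X ⊆ U) :
    ∀ᶠ t in atTop, X t ∈ U := by
  have htail : Antitone fun t => closure (X '' Ici t) :=
    fun _ _ hst => closure_mono (image_mono (Ici_subset_Ici.2 hst))
  obtain ⟨t, ht⟩ := exists_subset_nhds_of_isCompact' htail.directed_ge
    (fun _ => hXb.isCompact_closure.of_isClosed_subset isClosed_closure
      (closure_mono (image_subset_range _ _)))
    (fun _ => isClosed_closure) (fun x hx => hU.mem_nhds (hLU hx))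
  exact eventually_atTop.2 ⟨t, fun s hs => ht (subset_closure ⟨s, hs, rfl⟩)⟩

theorem exists_mem_limitSet_of_frequently (hXb : IsBounded (range X)) {S : Set E}
    (hS : IsClosed S) (h : ∃ᶠ t in atTop, X t ∈ S) : (limitSet X ∩ S).Nonempty := by
  have hK : IsCompact (closure (range X) ∩ S) := hXb.isCompact_closure.inter_right hS
  obtain ⟨z, ⟨-, hzS⟩, hz⟩ := hK.exists_mapClusterPt_of_frequently
    (h.mono fun t ht => ⟨subset_closure (mem_range_self t), ht⟩)
  exact ⟨z, mem_limitSet_iff.2 hz, hzS⟩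

theorem ordConnected_image_limitSet (hXb : IsBounded (range X)) (hXc : Continuous X)
    {V : E → ℝ} (hV : Continuous V) :
    (V '' limitSet X).OrdConnected := by
  refine ordConnected_of_Ioo ?_
  rintro _ ⟨a, ha, rfl⟩ _ ⟨b, hb, rfl⟩ - r hr
  suffices ∃ᶠ t in atTop, X t ∈ V ⁻¹' {r} by
    obtain ⟨z, hz, hzr⟩ :=
      exists_mem_limitSet_of_frequently hXb (isClosed_singleton.preimage hV) this
    exact ⟨z, hz, hzr⟩
  refine frequently_atTop.2 fun T => ?_
  obtain ⟨t₁, hTt₁, h₁⟩ := frequently_atTop.1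
    ((mem_limitSet_iff.1 ha).frequently (hV.continuousAt (Iio_mem_nhds hr.1))) T
  obtain ⟨t₂, ht₁₂, h₂⟩ := frequently_atTop.1
    ((mem_limitSet_iff.1 hb).frequently (hV.continuousAt (Ioi_mem_nhds hr.2))) t₁
  obtain ⟨t, ht, hVt⟩ := intermediate_value_Icc ht₁₂ (hV.comp hXc).continuousOn
    ⟨le_of_lt h₁, le_of_lt h₂⟩
  exact ⟨t, hTt₁.trans ht.1, hVt⟩

end LimitSet

section Flow

variable {E : Type*} [NormedAddCommGroup E] [NormedSpace ℝ E]

theorem ODE_solution_unique_univ_of_locallyLipschitz {v : E → E} (hv : LocallyLipschitz v)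
    {f g : ℝ → E} (hf : ∀ t, HasDerivAt f (v (f t)) t) (hg : ∀ t, HasDerivAt g (v (g t)) t)
    {t₀ : ℝ} (heq : f t₀ = g t₀) : f = g := by
  have hfc : Continuous f := continuous_iff_continuousAt.2 fun t => (hf t).continuousAt
  have hgc : Continuous g := continuous_iff_continuousAt.2 fun t => (hg t).continuousAt
  have hopen : IsOpen {t | f t = g t} := isOpen_iff_mem_nhds.2 fun t (ht : f t = g t) => by
    obtain ⟨K, s, hs, hK⟩ := hv (f t)
    exact ODE_solution_unique_of_eventually (v := fun _ => v) (s := fun _ => s)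
      (Eventually.of_forall fun _ => hK)
      (Eventually.of_forall hf |>.and (hfc.continuousAt hs))
      (Eventually.of_forall hg |>.and (hgc.continuousAt (ht ▸ hs))) ht
  have hclopen : IsClopen {t | f t = g t} := ⟨isClosed_eq hfc hgc, hopen⟩
  exact funext <| eq_univ_iff_forall.1 (hclopen.eq_univ ⟨t₀, heq⟩)

variable {F : E → E} {φ : ℝ → E → E}

theorem IsFlowOf.continuous_orbit (hφ : IsFlowOf F φ) (x : E) : Continuous fun t => φ t x :=
  continuous_iff_continuousAt.2 fun t => (hφ.2.2 x t).continuousAt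

theorem IsFlowOf.apply_eq_self (hF : LocallyLipschitz F) (hφ : IsFlowOf F φ) {x : E}
    (hx : F x = 0) (t : ℝ) : φ t x = x :=
  congrFun (ODE_solution_unique_univ_of_locallyLipschitz hF (hφ.2.2 x) (g := fun _ => x)
    (fun t => by simpa [hx] using hasDerivAt_const t x) (hφ.1 x)) t

theorem IsFlowOf.continuous_apply [ProperSpace E] (hF : LocallyLipschitz F)
    (hφ : IsFlowOf F φ) {T : ℝ} (hT : 0 ≤ T) : Continuous (φ T) := by
  refine Metric.continuous_iff.2 fun x ε hε => ?_
  obtain ⟨R, hR⟩ := ((isCompact_Icc (a := 0) (b := T)).image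
    (hφ.continuous_orbit x)).isBounded.subset_closedBall 0
  obtain ⟨K, hK⟩ :=
    hF.locallyLipschitzOn.exists_lipschitzOnWith_of_compact (isCompact_closedBall (0 : E) (R + ε))
  set δ := ε / 2 * Real.exp (-(K * T))
  refine ⟨δ, by positivity, fun y hy => ?_⟩
  by_contra! hsep
  -- the first time `τ` at which the orbits of `x` and `y` are `ε` apart
  set B := {s ∈ Icc 0 T | ε ≤ dist (φ s y) (φ s x)}
  have hB : IsClosed B := isClosed_Icc.inter
    (isClosed_le continuous_const ((hφ.continuous_orbit y).dist (hφ.continuous_orbit x)))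
  have hBbdd : BddBelow B := ⟨0, fun s hs => hs.1.1⟩
  have hτ : sInf B ∈ B := hB.csInf_mem ⟨T, ⟨⟨hT, le_rfl⟩, hsep⟩⟩ hBbdd
  set τ := sInf B
  have hclose : ∀ s ∈ Ico 0 τ, dist (φ s y) (φ s x) < ε := fun s hs =>
    not_le.1 fun h => (csInf_le hBbdd ⟨⟨hs.1, hs.2.le.trans hτ.1.2⟩, h⟩).not_gt hs.2
  have hxR : ∀ s ∈ Ico 0 τ, φ s x ∈ closedBall (0 : E) R := fun s hs =>
    hR ⟨s, ⟨hs.1, hs.2.le.trans hτ.1.2⟩, rfl⟩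
  have hgron := dist_le_of_trajectories_ODE_of_mem (v := fun _ => F)
    (s := fun _ => closedBall (0 : E) (R + ε)) (fun _ _ => hK)
    (hφ.continuous_orbit y).continuousOn (fun s _ => (hφ.2.2 y s).hasDerivWithinAt)
    (fun s hs => by
      have hxs := mem_closedBall.1 (hxR s hs)
      rw [mem_closedBall]
      linarith [dist_triangle (φ s y) (φ s x) 0, hclose s hs])
    (hφ.continuous_orbit x).continuousOn (fun s _ => (hφ.2.2 x s).hasDerivWithinAt)
    (fun s hs => closedBall_subset_closedBall (by linarith) (hxR s hs))
    (by simpa only [hφ.1] using hy.le) τ ⟨hτ.1.1, le_rfl⟩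
  have hexp : δ * Real.exp (K * (τ - 0)) ≤ ε / 2 := by
    calc δ * Real.exp (K * (τ - 0)) ≤ δ * Real.exp (K * T) := by
          gcongr
          linarith [hτ.1.2]
      _ = ε / 2 := by rw [mul_assoc, ← Real.exp_add, neg_add_cancel, Real.exp_zero, mul_one]
  linarith [hτ.2]

end Flow

section Lyapunov

variable {E : Type*} [NormedAddCommGroup E] [NormedSpace ℝ E]

def IsStrictLyapunov (F : E → E) (φ : ℝ → E → E) (V : E → ℝ) : Prop :=
  ∀ x, F x ≠ 0 → ∀ t > (0:ℝ), V (φ t x) < V x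

variable {F : E → E} {φ : ℝ → E → E} {V : E → ℝ} {X : ℝ → E}

theorem IsStrictLyapunov.apply_le (hV : IsStrictLyapunov F φ V) (hF : LocallyLipschitz F)
    (hφ : IsFlowOf F φ) (x : E) {t : ℝ} (ht : 0 ≤ t) : V (φ t x) ≤ V x := by
  by_cases hx : F x = 0
  · rw [hφ.apply_eq_self hF hx]
  rcases ht.eq_or_lt with rfl | ht
  · rw [hφ.1]
  · exact (hV x hx t ht).le

theorem IsAPT.mem_limitSet_apply (hX : IsAPT φ X) {h : ℝ} (hh : 0 < h) {x : E}
    (hc : ContinuousAt (φ h) x) (hx : x ∈ limitSet X) : φ h x ∈ limitSet X := by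
  rw [mem_limitSet_iff, mapClusterPt_iff_frequently]
  intro N hN
  obtain ⟨ε, hε, hball⟩ := Metric.mem_nhds_iff.1 hN
  obtain ⟨t₀, ht₀⟩ := hX h hh (ε / 2) (half_pos hε)
  have hnear : ∃ᶠ t in atTop, dist (φ h (X t)) (φ h x) < ε / 2 :=
    (mem_limitSet_iff.1 hx).frequently (hc (ball_mem_nhds _ (half_pos hε)))
  have hshift : ∃ᶠ t in atTop, X (t + h) ∈ N :=
    (hnear.and_eventually (eventually_ge_atTop t₀)).mono fun t ⟨hd, ht⟩ => hball <| by
      have := ht₀ t ht h ⟨hh.le, le_rfl⟩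
      rw [← dist_eq_norm] at this
      rw [mem_ball]
      linarith [dist_triangle (X (t + h)) (φ h (X t)) (φ h x)]
  exact (tendsto_atTop_add_const_right atTop h tendsto_id).frequently_map _ (fun _ h => h) hshift

theorem IsAPT.eventually_dist_comp_le [ProperSpace E] {β : Type*} [PseudoMetricSpace β]
    {W : E → β} (hX : IsAPT φ X) (hXb : IsBounded (range X)) (hW : Continuous W) {T : ℝ}
    (hT : 0 < T) {η : ℝ} (hη : 0 < η) :
    ∀ᶠ t in atTop, ∀ h ∈ Icc 0 T, dist (W (X (t + h))) (W (φ h (X t))) ≤ η := by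
  set K := cthickening 1 (closure (range X))
  obtain ⟨ρ, hρ, hUC⟩ := Metric.uniformContinuousOn_iff_le.1
    (hXb.isCompact_closure.cthickening.uniformContinuousOn_of_continuous (s := K) hW.continuousOn)
    η hη
  obtain ⟨t₀, ht₀⟩ := hX T hT (min ρ 1) (lt_min hρ one_pos)
  refine eventually_atTop.2 ⟨t₀, fun t ht h hh => ?_⟩
  have hd : dist (X (t + h)) (φ h (X t)) ≤ min ρ 1 := by
    rw [dist_eq_norm]; exact ht₀ t ht h hh
  have hXK : X (t + h) ∈ closure (range X) := subset_closure (mem_range_self _)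
  have hφK : φ h (X t) ∈ K := mem_cthickening_of_dist_le _ _ 1 _ hXK
    (dist_comm (X (t + h)) _ ▸ hd.trans (min_le_right _ _))
  exact hUC _ (self_subset_cthickening _ hXK) _ hφK (hd.trans (min_le_left _ _))

theorem image_limitSet_subset_image_equilibria [ProperSpace E] (hF : LocallyLipschitz F)
    (hφ : IsFlowOf F φ) (hV : Continuous V) (hLyap : IsStrictLyapunov F φ V) (hX : IsAPT φ X)
    (hXb : IsBounded (range X)) :
    V '' limitSet X ⊆ V '' (limitSet X ∩ {x | F x = 0}) := by
  rintro _ ⟨z, hz, rfl⟩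
  by_contra hz_eq
  set L := limitSet X
  have hLc : IsCompact L := isCompact_limitSet hXb
  obtain ⟨ε, hε, hband⟩ :
      ∃ ε > 0, Icc (V z - ε) (V z + ε) ⊆ (V '' (L ∩ {x | F x = 0}))ᶜ := by
    have hcl : IsClosed (V '' (L ∩ {x | F x = 0})) :=
      ((hLc.inter_right (isClosed_eq hF.continuous continuous_const)).image hV).isClosed
    simpa only [← Real.closedBall_eq_Icc] using
      nhds_basis_closedBall.mem_iff.1 (hcl.isOpen_compl.mem_nhds hz_eq)
  obtain ⟨δ, hδ, hdec⟩ := hLc.exists_pos_forall_mem_thickening_le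
    (isClosed_Icc.preimage hV) (f := fun p => V p - V (φ 1 p))
    (hV.sub (hV.comp (hφ.continuous_apply hF zero_le_one)))
    (fun p ⟨hpL, hpI⟩ => sub_pos.2 <|
      hLyap p (fun hp0 => hband hpI ⟨p, ⟨hpL, hp0⟩, rfl⟩) 1 one_pos)
  set η := min (δ / 2) (ε / 4)
  have hη : 0 < η := by positivity
  have happrox := hX.eventually_dist_comp_le hXb hV one_pos hη
  have hrise : ∀ᶠ t in atTop, ∀ h ∈ Icc (0:ℝ) 1, V (X (t + h)) ≤ V (X t) + η :=
    happrox.mono fun t ht h hh => by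
      linarith [(abs_le.1 (ht h hh)).2, hLyap.apply_le hF hφ (X t) hh.1]
  have hdesc : ∀ᶠ t in atTop,
      V (X t) ∈ Icc (V z - ε) (V z + ε) → V (X (t + 1)) ≤ V (X t) - (δ - η) :=
    ((eventually_mem_of_limitSet_subset hXb isOpen_thickening (self_subset_thickening hδ L)).and
      happrox).mono fun t ⟨hnear, ht⟩ hI => by
        linarith [hdec (X t) ⟨hI, hnear⟩, (abs_le.1 (ht 1 ⟨zero_le_one, le_rfl⟩)).2]
  have hfreq : ∃ᶠ t in atTop, V (X t) ∈ Ioo (V z - ε / 2) (V z + ε) :=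
    ((mem_limitSet_iff.1 hz).continuousAt_comp hV.continuousAt).frequently
      (Ioo_mem_nhds (by linarith) (by linarith))
  have hlow := eventually_le_of_rise_le_of_descent (by linarith [min_le_right (δ / 2) (ε / 4)])
    (by linarith [min_le_left (δ / 2) (ε / 4)]) hrise hdesc (hfreq.mono fun _ ht => ht.2.le)
  obtain ⟨t, ht, hlow⟩ := (hfreq.and_eventually hlow).exists
  linarith [ht.1, min_le_right (δ / 2) (ε / 4)]

end Lyapunov

/-- if `V(L ∩ Eq(F))` has empty interior then the limit set of a
bounded APT is contained in the equilibrium set and `V` is constant on it. -/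
theorem limitSet_subset_eq_of_interior_empty {m : ℕ}
    (F : EuclideanSpace ℝ (Fin m) → EuclideanSpace ℝ (Fin m))
    (φ : ℝ → EuclideanSpace ℝ (Fin m) → EuclideanSpace ℝ (Fin m))
    (V : EuclideanSpace ℝ (Fin m) → ℝ) (X : ℝ → EuclideanSpace ℝ (Fin m))
    (hF : ContDiff ℝ 1 F) (hφ : IsFlowOf F φ)
    (hVc : Continuous V)
    (hLyap : ∀ x, F x ≠ 0 → ∀ t > (0:ℝ), V (φ t x) < V x)
    (hX : IsAPT φ X) (hXc : Continuous X) (hXb : ∃ C : ℝ, ∀ t, ‖X t‖ ≤ C)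
    (hint : interior (V '' (limitSet X ∩ {x | F x = 0})) = ∅) :
    limitSet X ⊆ {x | F x = 0} ∧
      ∀ x ∈ limitSet X, ∀ y ∈ limitSet X, V x = V y := by
  have hbdd : IsBounded (range X) := by
    obtain ⟨C, hC⟩ := hXb
    exact isBounded_iff_forall_norm_le.2 ⟨C, forall_mem_range.2 hC⟩
  have hsub := image_limitSet_subset_image_equilibria hF.locallyLipschitz hφ hVc hLyap hX hbdd
  have hconst : ∀ x ∈ limitSet X, ∀ y ∈ limitSet X, V x = V y := by
    intro x hx y hy
    by_contra hne
    wlog hlt : V x < V y generalizing x y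
    · exact this y hy x hx (Ne.symm hne) ((Ne.lt_or_gt hne).resolve_left hlt)
    have hIoo : Ioo (V x) (V y) ⊆ interior (V '' (limitSet X ∩ {x | F x = 0})) :=
      isOpen_Ioo.subset_interior_iff.2 <| Ioo_subset_Icc_self.trans <| .trans
        ((ordConnected_image_limitSet hbdd hXc hVc).out ⟨x, hx, rfl⟩ ⟨y, hy, rfl⟩) hsub
    rw [hint] at hIoo
    exact (nonempty_Ioo.2 hlt).ne_empty (subset_empty_iff.1 hIoo)
  refine ⟨fun x hx => by_contra fun hFx => ?_, hconst⟩
  have hφx := hX.mem_limitSet_apply one_pos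
    ((hφ.continuous_apply hF.locallyLipschitz zero_le_one).continuousAt) hx
  exact (hLyap x hFx 1 one_pos).ne (hconst _ hφx x hx)
end
end

section
/- Let A be a real m×m matrix and λ ∈ ℝ. Then the following are equivalent: (i) λ is not the real part of any eigenvalue of A; (ii) for every nonzero v ∈ ℝ^m, the function t ↦ ‖e^{t(A - λI)}v‖ is unbounded on ℝ. -/
open Set Filter Topology MeasureTheory Asymptotics

noncomputable section

/-!
Put `B = A - λ • 1`. The complex vectors whose orbit under `t ↦ exp (t • B)` is bounded on all of
`ℝ` form a `B`-invariant subspace. Along an eigenvector `w` of `B` with eigenvalue `β` the orbit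
is `exp (t β) • w`, of norm `exp (t Re β) ‖w‖`, which is bounded on `ℝ` exactly when `Re β = 0`.
Since a nonzero invariant subspace contains an eigenvector, bounded orbits exist iff `B` has an
eigenvalue on the imaginary axis, i.e. iff `λ` is the real part of an eigenvalue of `A`.
Complexification changes nothing: a real bounded orbit is a complex one, and the real parts of a
complex bounded orbit are a real one.
-/

open NormedSpace Matrix
open scoped Pointwise

theorem Real.bddAbove_range_exp_mul_mul_iff {a c : ℝ} (hc : 0 < c) :
    BddAbove (range fun t => Real.exp (t * a) * c) ↔ a = 0 := by
  refine ⟨fun h => ?_, fun ha => by simp [ha]⟩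
  by_contra ha
  refine not_bddAbove_iff.2 (fun C => ?_) h
  refine ⟨_, ⟨Real.log ((|C| + 1) / c) / a, rfl⟩, ?_⟩
  beta_reduce
  rw [div_mul_cancel₀ _ ha, Real.exp_log (by positivity), div_mul_cancel₀ _ hc.ne']
  linarith [le_abs_self C]

theorem Complex.norm_ofReal_comp {ι : Type*} [Fintype ι] (v : ι → ℝ) :
    ‖fun i => (v i : ℂ)‖ = ‖v‖ := by
  simp [Pi.norm_def]

theorem Complex.norm_re_comp_le {ι : Type*} [Fintype ι] (z : ι → ℂ) :
    ‖fun i => (z i).re‖ ≤ ‖z‖ :=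
  (pi_norm_le_iff_of_nonneg (norm_nonneg z)).2 fun i =>
    (Complex.abs_re_le_norm (z i)).trans (norm_le_pi_norm z i)

theorem Module.End.exists_hasEigenvector_mem {K V : Type*} [Field K] [IsAlgClosed K]
    [AddCommGroup V] [Module K V] [FiniteDimensional K V] (f : Module.End K V)
    {p : Submodule K V} (hp : ∀ x ∈ p, f x ∈ p) (hne : p ≠ ⊥) :
    ∃ μ, ∃ x ∈ p, f.HasEigenvector μ x := by
  have : Nontrivial p := Submodule.nontrivial_iff_ne_bot.2 hne
  obtain ⟨μ, hμ⟩ := Module.End.exists_eigenvalue (f.restrict hp)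
  obtain ⟨x, hx⟩ := hμ.exists_hasEigenvector
  refine ⟨μ, x, x.2, Module.End.mem_eigenspace_iff.2 ?_, fun h => hx.2 (Subtype.ext h)⟩
  simpa using congrArg Subtype.val hx.apply_eq_smul

namespace Matrix

variable {n : Type*} [Fintype n]

theorem map_ofReal_mulVec_ofReal (N : Matrix n n ℝ) (v : n → ℝ) :
    N.map Complex.ofReal *ᵥ (fun i => (v i : ℂ)) = fun i => ((N *ᵥ v) i : ℂ) :=
  funext fun i => (RingHom.map_mulVec Complex.ofRealHom N v i).symm

theorem re_map_ofReal_mulVec (N : Matrix n n ℝ) (w : n → ℂ) :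
    (fun i => ((N.map Complex.ofReal *ᵥ w) i).re) = N *ᵥ fun i => (w i).re := by
  ext i
  simp [mulVec, dotProduct, Complex.re_sum]

variable [DecidableEq n]

open scoped Norms.Operator in
theorem exp_mulVec_of_mulVec_eq_smul {𝕂 : Type*} [RCLike 𝕂] {M : Matrix n n 𝕂}
    {w : n → 𝕂} {c : 𝕂} (h : M *ᵥ w = c • w) : exp M *ᵥ w = exp c • w := by
  have hpow (k : ℕ) : M ^ k *ᵥ w = c ^ k • w := by
    induction k with
    | zero => simp
    | succ k ih => rw [pow_succ, ← mulVec_mulVec, h, mulVec_smul, ih, smul_smul, pow_succ']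
  refine ((exp_series_hasSum_exp' (𝕂 := 𝕂) M).map (mulVec.addMonoidHomLeft w)
    (continuous_id.matrix_mulVec continuous_const)).unique ?_
  simpa [Function.comp_def, mulVec.addMonoidHomLeft, smul_mulVec, hpow, smul_smul]
    using (exp_series_hasSum_exp' (𝕂 := 𝕂) c).smul_const w

theorem norm_exp_smul_mulVec_of_mulVec_eq_smul {M : Matrix n n ℂ} {w : n → ℂ} {β : ℂ}
    (h : M *ᵥ w = β • w) (t : ℝ) : ‖exp (t • M) *ᵥ w‖ = Real.exp (t * β.re) * ‖w‖ := by
  have ht : (t • M) *ᵥ w = (t * β) • w := by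
    rw [smul_mulVec, h, ← smul_assoc, Complex.real_smul]
  rw [exp_mulVec_of_mulVec_eq_smul ht, ← Complex.exp_eq_exp_ℂ, norm_smul, Complex.norm_exp,
    Complex.re_ofReal_mul]

open scoped Norms.Operator in
theorem exp_map {R S : Type*} [RCLike R] [RCLike S] (f : R →+* S) (hf : Continuous f)
    (M : Matrix n n R) : exp (M.map f) = (exp M).map f :=
  (map_exp f.mapMatrix (continuous_id.matrix_map hf) M).symm

theorem exp_smul_map_ofReal (B : Matrix n n ℝ) (t : ℝ) :
    exp (t • B.map Complex.ofReal) = (exp (t • B)).map Complex.ofReal := by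
  convert exp_map Complex.ofRealHom Complex.continuous_ofReal (t • B) using 2
  · ext i j
    simp
  · rfl

theorem spectrum_map_ofReal_sub_smul_one (A : Matrix n n ℝ) (r : ℝ) :
    spectrum ℂ ((A - r • 1).map Complex.ofReal) =
      spectrum ℂ (A.map Complex.ofReal) - ({(r : ℂ)} : Set ℂ) := by
  rw [spectrum.sub_singleton_eq]
  congr 1
  ext i j
  by_cases hij : i = j <;> simp [hij, Algebra.algebraMap_eq_smul_one]

section BoundedOrbit

variable {𝕂 : Type*} [RCLike 𝕂]

def boundedOrbitSubmodule (M : Matrix n n 𝕂) : Submodule 𝕂 (n → 𝕂) where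
  carrier := {w | BddAbove (range fun t : ℝ => ‖exp (t • M) *ᵥ w‖)}
  zero_mem' := ⟨0, forall_mem_range.2 fun t => by simp⟩
  add_mem' := by
    rintro v w ⟨C, hC⟩ ⟨D, hD⟩
    refine ⟨C + D, forall_mem_range.2 fun t => ?_⟩
    rw [mulVec_add]
    exact (norm_add_le _ _).trans (add_le_add (hC ⟨t, rfl⟩) (hD ⟨t, rfl⟩))
  smul_mem' := by
    rintro c w ⟨C, hC⟩
    refine ⟨‖c‖ * C, forall_mem_range.2 fun t => ?_⟩
    rw [mulVec_smul, norm_smul]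
    exact mul_le_mul_of_nonneg_left (hC ⟨t, rfl⟩) (norm_nonneg c)

theorem mem_boundedOrbitSubmodule {M : Matrix n n 𝕂} {w : n → 𝕂} :
    w ∈ M.boundedOrbitSubmodule ↔ BddAbove (range fun t : ℝ => ‖exp (t • M) *ᵥ w‖) :=
  Iff.rfl

theorem mulVec_mem_boundedOrbitSubmodule {M : Matrix n n 𝕂} {w : n → 𝕂}
    (hw : w ∈ M.boundedOrbitSubmodule) : M *ᵥ w ∈ M.boundedOrbitSubmodule := by
  obtain ⟨C, hC⟩ := hw
  let L := LinearMap.toContinuousLinearMap M.mulVecLin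
  refine ⟨‖L‖ * C, forall_mem_range.2 fun t => ?_⟩
  have hcomm : exp (t • M) *ᵥ (M *ᵥ w) = M *ᵥ (exp (t • M) *ᵥ w) := by
    rw [mulVec_mulVec, mulVec_mulVec, (((Commute.refl M).smul_left t).exp_left).eq]
  calc ‖exp (t • M) *ᵥ (M *ᵥ w)‖ = ‖L (exp (t • M) *ᵥ w)‖ := by rw [hcomm]; rfl
    _ ≤ ‖L‖ * C := L.le_opNorm_of_le (hC ⟨t, rfl⟩)

end BoundedOrbit

theorem mem_boundedOrbitSubmodule_iff_re_eq_zero {M : Matrix n n ℂ} {w : n → ℂ} {β : ℂ}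
    (h : M *ᵥ w = β • w) (hw : w ≠ 0) : w ∈ M.boundedOrbitSubmodule ↔ β.re = 0 := by
  simp_rw [mem_boundedOrbitSubmodule, norm_exp_smul_mulVec_of_mulVec_eq_smul h]
  exact Real.bddAbove_range_exp_mul_mul_iff (norm_pos_iff.2 hw)

theorem exists_re_eq_zero_mem_spectrum_iff (M : Matrix n n ℂ) :
    (∃ β ∈ spectrum ℂ M, β.re = 0) ↔ M.boundedOrbitSubmodule ≠ ⊥ := by
  constructor
  · rintro ⟨β, hβ, hre⟩
    rw [← spectrum_toLin', ← Module.End.hasEigenvalue_iff_mem_spectrum] at hβ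
    obtain ⟨w, hw⟩ := hβ.exists_hasEigenvector
    have hMw : M *ᵥ w = β • w := by simpa using hw.apply_eq_smul
    exact (Submodule.ne_bot_iff _).2
      ⟨w, (mem_boundedOrbitSubmodule_iff_re_eq_zero hMw hw.2).2 hre, hw.2⟩
  · intro hne
    obtain ⟨β, w, hwS, hw⟩ := Module.End.exists_hasEigenvector_mem (toLin' M)
      (fun _ => mulVec_mem_boundedOrbitSubmodule) hne
    have hMw : M *ᵥ w = β • w := by simpa using hw.apply_eq_smul
    refine ⟨β, ?_, (mem_boundedOrbitSubmodule_iff_re_eq_zero hMw hw.2).1 hwS⟩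
    rw [← spectrum_toLin']
    exact (Module.End.hasEigenvalue_of_hasEigenvector hw).mem_spectrum

theorem ofReal_mem_boundedOrbitSubmodule_map_ofReal_iff {B : Matrix n n ℝ} {v : n → ℝ} :
    (fun i => (v i : ℂ)) ∈ (B.map Complex.ofReal).boundedOrbitSubmodule ↔
      v ∈ B.boundedOrbitSubmodule := by
  simp_rw [mem_boundedOrbitSubmodule, exp_smul_map_ofReal, map_ofReal_mulVec_ofReal,
    Complex.norm_ofReal_comp]

theorem re_mem_boundedOrbitSubmodule_of_mem_map_ofReal {B : Matrix n n ℝ} {w : n → ℂ}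
    (hw : w ∈ (B.map Complex.ofReal).boundedOrbitSubmodule) :
    (fun i => (w i).re) ∈ B.boundedOrbitSubmodule := by
  obtain ⟨C, hC⟩ := hw
  refine ⟨C, forall_mem_range.2 fun t => ?_⟩
  calc ‖exp (t • B) *ᵥ fun i => (w i).re‖
      = ‖fun i => ((exp (t • B.map Complex.ofReal) *ᵥ w) i).re‖ := by
        rw [exp_smul_map_ofReal, re_map_ofReal_mulVec]
    _ ≤ C := (Complex.norm_re_comp_le _).trans (hC ⟨t, rfl⟩)

theorem boundedOrbitSubmodule_map_ofReal_ne_bot_iff (B : Matrix n n ℝ) :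
    (B.map Complex.ofReal).boundedOrbitSubmodule ≠ ⊥ ↔ B.boundedOrbitSubmodule ≠ ⊥ := by
  simp_rw [Submodule.ne_bot_iff]
  constructor
  · rintro ⟨w, hwS, hw⟩
    -- the real part of `-I • w` is the imaginary part of `w`
    by_cases hre : (fun i => (w i).re) = 0
    · refine ⟨fun i => ((-Complex.I • w) i).re,
        re_mem_boundedOrbitSubmodule_of_mem_map_ofReal (Submodule.smul_mem _ _ hwS),
        fun him => ?_⟩
      refine hw (funext fun i => Complex.ext ?_ ?_)
      · simpa using congrFun hre i
      · simpa using congrFun him i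
    · exact ⟨_, re_mem_boundedOrbitSubmodule_of_mem_map_ofReal hwS, hre⟩
  · rintro ⟨v, hvS, hv⟩
    refine ⟨_, ofReal_mem_boundedOrbitSubmodule_map_ofReal_iff.2 hvS, fun h => hv ?_⟩
    ext i
    simpa using congrFun h i

end Matrix

/-- `λ` is not the real part of an eigenvalue of `A` iff
`t ↦ e^{t(A-λI)}v` is unbounded on `ℝ` for every nonzero `v`. -/
theorem not_realPart_eigenvalue_iff_unbounded {m : ℕ}
    (A : Matrix (Fin m) (Fin m) ℝ) (lam : ℝ) :
    (∀ μ ∈ spectrum ℂ (A.map Complex.ofReal), μ.re ≠ lam) ↔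
      ∀ v : Fin m → ℝ, v ≠ 0 →
        ¬ BddAbove (Set.range fun t : ℝ =>
          ‖(NormedSpace.exp (t • (A - lam • (1 : Matrix (Fin m) (Fin m) ℝ)))).mulVec v‖) := by
  have key : (∃ μ ∈ spectrum ℂ (A.map Complex.ofReal), μ.re = lam) ↔
      (A - lam • 1).boundedOrbitSubmodule ≠ ⊥ := by
    rw [← boundedOrbitSubmodule_map_ofReal_ne_bot_iff, ← exists_re_eq_zero_mem_spectrum_iff,
      spectrum_map_ofReal_sub_smul_one, Set.sub_singleton]
    simp [sub_eq_zero]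
  rw [Submodule.ne_bot_iff] at key
  simpa [mem_boundedOrbitSubmodule, not_imp_not] using not_congr key
end
end
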